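/- Let g(x) = |x|^ℓ with ℓ > 1, restricted to an interval on which g is monotone (e.g., [0,∞) or (-∞,0]). Then for all distinct points a,b,c,d in this interval with (b-a)(d-c) > 0, the cross-ratio distortion satisfies κ_g(a,b,c,d) ≥ 1. -/

import Mathlib

/-!
In logarithmic coordinates `x = exp X`, `y = exp Y` the slope of `t ↦ t ^ l` between `x` and
`y` is `exp ((l - 1) (X + Y) / 2) · sinh (l u) / sinh u` with `u = (Y - X) / 2`. Since
`κ = slope(a,d) slope(b,c) / (slope(a,c) slope(b,d))`, the exponential factors cancel and
`κ ≥ 1` becomes `Φ(u₁) + Φ(u₂) ≤ Φ(v₁) + Φ(v₂)` for `Φ u = log (sinh (l u) / sinh u)`, where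
`v₁ ≤ u₁, u₂ ≤ v₂` and `u₁ + u₂ = v₁ + v₂`. This holds because `Φ` is even and convex:
`Φ'' = 1 / sinh² u - l² / sinh² (l u)` is nonnegative because `l sinh u ≤ sinh (l u)`, which
is the nonpositive Schwarzian of `t ^ l` read in these coordinates. A point at `0` is reached
by shifting all four points and passing to the limit, and `(-∞, 0]` by the symmetry `x ↦ -x`.
-/

/-- Cross-ratio of four points. -/
noncomputable def chi (a b c d : ℝ) : ℝ := ((c - b) * (d - a)) / ((c - a) * (d - b))

/-- Distortion of the cross-ratio by a map `g`. -/
noncomputable def kappa (g : ℝ → ℝ) (a b c d : ℝ) : ℝ :=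
  chi (g a) (g b) (g c) (g d) / chi a b c d

open Real Set Filter Topology

-- No distinctness is needed: when a difference vanishes, both sides are `0`.
lemma kappa_eq_slope (g : ℝ → ℝ) (a b c d : ℝ) :
    kappa g a b c d = slope g a d * slope g b c / (slope g a c * slope g b d) := by
  simp only [kappa, chi, slope_def_field, div_eq_mul_inv, mul_inv, inv_inv]
  ring

lemma kappa_swap (g : ℝ → ℝ) (a b c d : ℝ) : kappa g a b c d = kappa g b a d c := by
  simp only [kappa, chi]
  ring

lemma kappa_neg (g : ℝ → ℝ) (a b c d : ℝ) :
    kappa g (-a) (-b) (-c) (-d) = kappa (fun x => g (-x)) a b c d := by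
  simp only [kappa, chi]
  congr 1
  ring

lemma ConvexOn.add_le_add_of_mem_Icc {s : Set ℝ} {f : ℝ → ℝ} (hf : ConvexOn ℝ s f)
    {m M x y : ℝ} (hm : m ∈ s) (hM : M ∈ s) (hx : x ∈ Icc m M) (hy : y ∈ Icc m M)
    (hxy : x + y = m + M) :
    f x + f y ≤ f m + f M := by
  rcases (hx.1.trans hx.2).eq_or_lt with rfl | hmM
  · obtain rfl : x = m := le_antisymm hx.2 hx.1
    obtain rfl : y = x := le_antisymm hy.2 hy.1
    rfl
  set θ := (M - x) / (M - m)
  have hθ₀ : 0 ≤ θ := div_nonneg (by linarith [hx.2]) (by linarith)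
  have hθ₁ : θ ≤ 1 := (div_le_one (by linarith)).2 (by linarith [hx.1])
  have hx' : θ • m + (1 - θ) • M = x := by simp only [θ, smul_eq_mul]; field_simp; ring
  have hy' : (1 - θ) • m + θ • M = y := by
    simp only [θ, smul_eq_mul]; field_simp; linear_combination (m - M) * hxy
  have h₁ := hf.2 hm hM hθ₀ (sub_nonneg.2 hθ₁) (by ring)
  have h₂ := hf.2 hm hM (sub_nonneg.2 hθ₁) hθ₀ (by ring)
  rw [hx'] at h₁
  rw [hy'] at h₂
  simp only [smul_eq_mul] at h₁ h₂
  linarith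

lemma convexOn_sinh_Ici : ConvexOn ℝ (Ici 0) sinh := by
  refine MonotoneOn.convexOn_of_deriv (convex_Ici 0) continuous_sinh.continuousOn
    differentiable_sinh.differentiableOn ?_
  rw [Real.deriv_sinh, interior_Ici]
  exact cosh_strictMonoOn.monotoneOn.mono Ioi_subset_Ici_self

lemma mul_sinh_le_sinh_mul {l u : ℝ} (hl : 1 ≤ l) (hu : 0 ≤ u) :
    l * sinh u ≤ sinh (l * u) := by
  rcases hu.eq_or_lt with rfl | hu
  · simp
  have hlu : 0 < l * u := mul_pos (by linarith) hu
  have h := convexOn_sinh_Ici.secant_mono (a := 0) self_mem_Ici hu.le hlu.le hu.ne' hlu.ne'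
    (le_mul_of_one_le_left hu.le hl)
  simp only [sinh_zero, sub_zero] at h
  rw [div_le_div_iff₀ hu hlu] at h
  nlinarith

lemma exp_sub_exp (x y : ℝ) : exp y - exp x = 2 * exp ((x + y) / 2) * sinh ((y - x) / 2) := by
  calc exp y - exp x = exp ((x + y) / 2 + (y - x) / 2) - exp ((x + y) / 2 + -((y - x) / 2)) := by
        ring_nf
    _ = _ := by rw [exp_add, exp_add, sinh_eq]; ring

lemma hasDerivAt_cosh_div_sinh {x : ℝ} (hx : x ≠ 0) :
    HasDerivAt (fun x => cosh x / sinh x) (-1 / sinh x ^ 2) x := by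
  refine ((hasDerivAt_cosh x).div (hasDerivAt_sinh x) (sinh_ne_zero.2 hx)).congr_deriv ?_
  rw [← cosh_sq_sub_sinh_sq x]
  ring

/-- `log (sinh (l u) / sinh u)`, given its limit `log l` at `u = 0`. Since `log` of a negative
number is the `log` of its absolute value, this is even in `u`. -/
noncomputable def logSinhRatio (l u : ℝ) : ℝ :=
  if u = 0 then log l else log (sinh (l * u)) - log (sinh u)

section

variable {l u : ℝ}

lemma logSinhRatio_zero (l : ℝ) : logSinhRatio l 0 = log l := if_pos rfl

lemma logSinhRatio_of_ne (hu : u ≠ 0) : logSinhRatio l u = log (sinh (l * u)) - log (sinh u) :=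
  if_neg hu

lemma logSinhRatio_neg (l u : ℝ) : logSinhRatio l (-u) = logSinhRatio l u := by
  unfold logSinhRatio
  simp [sinh_neg, log_neg_eq_log]

lemma hasDerivAt_logSinhRatio (hl : l ≠ 0) (hu : u ≠ 0) :
    HasDerivAt (logSinhRatio l) (l * (cosh (l * u) / sinh (l * u)) - cosh u / sinh u) u := by
  have h₁ : HasDerivAt (fun u => log (sinh (l * u))) (cosh (l * u) * l / sinh (l * u)) u :=
    ((hasDerivAt_sinh _).comp u (hasDerivAt_const_mul l)).log
      (sinh_ne_zero.2 (mul_ne_zero hl hu))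
  have h₂ : HasDerivAt (fun u => log (sinh u)) (cosh u / sinh u) u :=
    (hasDerivAt_sinh u).log (sinh_ne_zero.2 hu)
  refine ((h₁.sub h₂).congr_deriv (by ring)).congr_of_eventuallyEq ?_
  filter_upwards [eventually_ne_nhds hu] with v hv using logSinhRatio_of_ne hv

lemma hasDerivAt_mul_coth_mul_sub_coth (hl : l ≠ 0) (hu : u ≠ 0) :
    HasDerivAt (fun u => l * (cosh (l * u) / sinh (l * u)) - cosh u / sinh u)
      (1 / sinh u ^ 2 - l ^ 2 / sinh (l * u) ^ 2) u := by
  have h := ((hasDerivAt_cosh_div_sinh (mul_ne_zero hl hu)).comp u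
    (hasDerivAt_const_mul l)).const_mul l
  refine (h.sub (hasDerivAt_cosh_div_sinh hu)).congr_deriv ?_
  ring

lemma continuousAt_logSinhRatio_zero (hl : l ≠ 0) : ContinuousAt (logSinhRatio l) 0 := by
  have hsl : Tendsto (fun u => u⁻¹ * sinh (l * u)) (𝓝[≠] 0) (𝓝 l) := by
    simpa using ((hasDerivAt_sinh _).comp 0 (hasDerivAt_const_mul l)).tendsto_slope_zero
  have hs : Tendsto (fun u => u⁻¹ * sinh u) (𝓝[≠] 0) (𝓝 1) := by
    simpa using (hasDerivAt_sinh 0).tendsto_slope_zero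
  rw [← continuousWithinAt_compl_self, ContinuousWithinAt, logSinhRatio_zero]
  have h := (hsl.log hl).sub (hs.log one_ne_zero)
  rw [log_one, sub_zero] at h
  refine h.congr' ?_
  filter_upwards [self_mem_nhdsWithin] with u (hu : u ≠ 0)
  rw [logSinhRatio_of_ne hu, log_mul (inv_ne_zero hu) (sinh_ne_zero.2 (mul_ne_zero hl hu)),
    log_mul (inv_ne_zero hu) (sinh_ne_zero.2 hu)]
  ring

lemma continuous_logSinhRatio (hl : l ≠ 0) : Continuous (logSinhRatio l) := by
  refine continuous_iff_continuousAt.2 fun u => ?_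
  rcases eq_or_ne u 0 with rfl | hu
  · exact continuousAt_logSinhRatio_zero hl
  · exact (hasDerivAt_logSinhRatio hl hu).continuousAt

lemma convexOn_Ici_logSinhRatio (hl : 1 ≤ l) : ConvexOn ℝ (Ici 0) (logSinhRatio l) := by
  have hl₀ : l ≠ 0 := by positivity
  refine convexOn_of_hasDerivWithinAt2_nonneg (convex_Ici 0)
    (continuous_logSinhRatio hl₀).continuousOn
    (fun u hu => (hasDerivAt_logSinhRatio hl₀ (interior_Ici.subset hu).ne').hasDerivWithinAt)
    (fun u hu =>
      (hasDerivAt_mul_coth_mul_sub_coth hl₀ (interior_Ici.subset hu).ne').hasDerivWithinAt)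
    fun u hu => ?_
  rw [interior_Ici] at hu
  have hsl : 0 < sinh (l * u) := sinh_pos_iff.2 (mul_pos (by linarith) hu)
  have hs : 0 < sinh u := sinh_pos_iff.2 hu
  rw [sub_nonneg, div_le_div_iff₀ (by positivity) (by positivity), one_mul, ← mul_pow]
  exact pow_le_pow_left₀ (by positivity) (mul_sinh_le_sinh_mul hl hu.le) 2

lemma log_le_logSinhRatio (hl : 1 ≤ l) (hu : 0 ≤ u) : log l ≤ logSinhRatio l u := by
  rcases hu.eq_or_lt with rfl | hu
  · exact (logSinhRatio_zero l).ge
  rw [logSinhRatio_of_ne hu.ne', le_sub_iff_add_le,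
    ← log_mul (by positivity) (sinh_pos_iff.2 hu).ne']
  exact log_le_log (by positivity) (mul_sinh_le_sinh_mul hl hu.le)

lemma monotoneOn_logSinhRatio (hl : 1 ≤ l) : MonotoneOn (logSinhRatio l) (Ici 0) := by
  intro u hu v hv huv
  rcases (mem_Ici.1 hu).eq_or_lt with rfl | hu'
  · exact (logSinhRatio_zero l).trans_le (log_le_logSinhRatio hl hv)
  exact (convexOn_Ici_logSinhRatio hl).le_right_of_left_le'' self_mem_Ici hv hu' huv
    ((logSinhRatio_zero l).trans_le (log_le_logSinhRatio hl hu))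

lemma convexOn_logSinhRatio (hl : 1 ≤ l) : ConvexOn ℝ univ (logSinhRatio l) := by
  have habs : abs '' univ = Ici (0 : ℝ) := by
    ext x
    exact ⟨by rintro ⟨y, -, rfl⟩; exact abs_nonneg y,
      fun hx => ⟨x, trivial, abs_of_nonneg hx⟩⟩
  have heven : logSinhRatio l ∘ abs = logSinhRatio l := funext fun u => by
    rcases abs_choice u with h | h <;> simp [h, logSinhRatio_neg]
  rw [← heven]
  exact (habs ▸ convexOn_Ici_logSinhRatio hl).comp (convexOn_norm convex_univ)
    (habs ▸ monotoneOn_logSinhRatio hl)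

end

lemma slope_rpow_eq_exp {l x y : ℝ} (hl : 0 < l) (hx : 0 < x) (hy : 0 < y) (hxy : x ≠ y) :
    slope (fun t => t ^ l) x y =
      exp ((l - 1) * (log x + log y) / 2 + logSinhRatio l ((log y - log x) / 2)) := by
  wlog h : x < y generalizing x y
  · rw [slope_comm, this hy hx hxy.symm (lt_of_le_of_ne (not_lt.1 h) hxy.symm), add_comm (log y),
      ← logSinhRatio_neg l ((log y - log x) / 2)]
    ring_nf
  have hu : 0 < (log y - log x) / 2 := by linarith [log_lt_log hx h]
  have hnum : y ^ l - x ^ l =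
      2 * exp (l * (log x + log y) / 2) * sinh (l * ((log y - log x) / 2)) := by
    rw [rpow_def_of_pos hx, rpow_def_of_pos hy, exp_sub_exp]
    ring_nf
  have hden : y - x = 2 * exp ((log x + log y) / 2) * sinh ((log y - log x) / 2) := by
    rw [← exp_sub_exp, exp_log hx, exp_log hy]
  have hsl : 0 < sinh (l * ((log y - log x) / 2)) := sinh_pos_iff.2 (mul_pos hl hu)
  have hs : 0 < sinh ((log y - log x) / 2) := sinh_pos_iff.2 hu
  rw [slope_def_field, hnum, hden, logSinhRatio_of_ne hu.ne', exp_add, exp_sub, exp_log hsl,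
    exp_log hs, show l * (log x + log y) / 2 = (l - 1) * (log x + log y) / 2 + (log x + log y) / 2
      by ring, exp_add]
  field_simp

section

variable {l a b c d : ℝ}

lemma slope_rpow_mul_slope_rpow_le_of_pos (hl : 1 ≤ l) (ha : 0 < a) (hc : 0 < c) (hab : a < b)
    (hcd : c < d) (hac : a ≠ c) (had : a ≠ d) (hbc : b ≠ c) (hbd : b ≠ d) :
    slope (fun t => t ^ l) a c * slope (fun t => t ^ l) b d ≤
      slope (fun t => t ^ l) a d * slope (fun t => t ^ l) b c := by
  have hl₀ : 0 < l := by linarith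
  have hb : 0 < b := ha.trans hab
  have hd : 0 < d := hc.trans hcd
  rw [slope_rpow_eq_exp hl₀ ha hc hac, slope_rpow_eq_exp hl₀ hb hd hbd,
    slope_rpow_eq_exp hl₀ ha hd had, slope_rpow_eq_exp hl₀ hb hc hbc, ← exp_add, ← exp_add,
    exp_le_exp]
  have hAB := log_lt_log ha hab
  have hCD := log_lt_log hc hcd
  have h := (convexOn_logSinhRatio hl).add_le_add_of_mem_Icc (mem_univ _) (mem_univ _)
    (m := (log c - log b) / 2) (M := (log d - log a) / 2) (x := (log c - log a) / 2)
    (y := (log d - log b) / 2) ⟨by linarith, by linarith⟩ ⟨by linarith, by linarith⟩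
    (by ring)
  linarith

lemma slope_rpow_mul_slope_rpow_le (hl : 1 ≤ l) (ha : 0 ≤ a) (hc : 0 ≤ c) (hab : a < b)
    (hcd : c < d) (hac : a ≠ c) (had : a ≠ d) (hbc : b ≠ c) (hbd : b ≠ d) :
    slope (fun t => t ^ l) a c * slope (fun t => t ^ l) b d ≤
      slope (fun t => t ^ l) a d * slope (fun t => t ^ l) b c := by
  have hcont (x y : ℝ) : Continuous fun t => slope (fun t => t ^ l) (x + t) (y + t) := by
    simp only [slope_def_field, add_sub_add_right_eq_sub]
    have := continuous_rpow_const (show 0 ≤ l by linarith)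
    fun_prop
  have hshift : ∀ t ∈ Ioi (0 : ℝ),
      slope (fun t => t ^ l) (a + t) (c + t) * slope (fun t => t ^ l) (b + t) (d + t) ≤
        slope (fun t => t ^ l) (a + t) (d + t) * slope (fun t => t ^ l) (b + t) (c + t) :=
    fun t (ht : 0 < t) => slope_rpow_mul_slope_rpow_le_of_pos hl (by linarith) (by linarith)
      (by linarith) (by linarith) ((add_left_injective t).ne hac)
      ((add_left_injective t).ne had) ((add_left_injective t).ne hbc)
      ((add_left_injective t).ne hbd)
  have hlim := le_of_tendsto_of_tendsto
    ((((hcont a c).mul (hcont b d)).tendsto 0).mono_left nhdsWithin_le_nhds)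
    ((((hcont a d).mul (hcont b c)).tendsto 0).mono_left nhdsWithin_le_nhds)
    (eventually_nhdsWithin_of_forall hshift)
  simpa using hlim

lemma one_le_kappa_rpow (hl : 1 ≤ l) (ha : 0 ≤ a) (hc : 0 ≤ c) (hab : a < b) (hcd : c < d)
    (hac : a ≠ c) (had : a ≠ d) (hbc : b ≠ c) (hbd : b ≠ d) :
    1 ≤ kappa (fun x => x ^ l) a b c d := by
  have hmono := strictMonoOn_rpow_Ici_of_exponent_pos (show 0 < l by linarith)
  have hpos : (0 : ℝ) < slope (fun x => x ^ l) a c * slope (fun x => x ^ l) b d :=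
    mul_pos (hmono.slope_pos ha hc hac)
      (hmono.slope_pos (ha.trans hab.le) (hc.trans hcd.le) hbd)
  rw [kappa_eq_slope, le_div_iff₀ hpos, one_mul]
  exact slope_rpow_mul_slope_rpow_le hl ha hc hab hcd hac had hbc hbd

lemma one_le_kappa_abs_rpow_of_nonneg (hl : 1 ≤ l) (ha : 0 ≤ a) (hb : 0 ≤ b) (hc : 0 ≤ c)
    (hd : 0 ≤ d) (hac : a ≠ c) (had : a ≠ d) (hbc : b ≠ c) (hbd : b ≠ d)
    (hor : 0 < (b - a) * (d - c)) :
    1 ≤ kappa (fun x => |x| ^ l) a b c d := by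
  have habs : kappa (fun x => |x| ^ l) a b c d = kappa (fun x => x ^ l) a b c d := by
    simp only [kappa, abs_of_nonneg ha, abs_of_nonneg hb, abs_of_nonneg hc, abs_of_nonneg hd]
  rw [habs]
  rcases mul_pos_iff.1 hor with ⟨hab, hcd⟩ | ⟨hba, hdc⟩
  · exact one_le_kappa_rpow hl ha hc (sub_pos.1 hab) (sub_pos.1 hcd) hac had hbc hbd
  · rw [kappa_swap]
    exact one_le_kappa_rpow hl hb hd (sub_neg.1 hba) (sub_neg.1 hdc) hbd hbc had hac

end

/-- For `g(x) = |x|^ℓ` with `ℓ > 1`, restricted to a half-line on which `g` is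
monotone (`[0,∞)` or `(-∞,0]`), the cross-ratio distortion satisfies
`κ_g(a,b,c,d) ≥ 1` for distinct points with `(b-a)(d-c) > 0`. -/
theorem kappa_abs_rpow_ge_one (l : ℝ) (hl : 1 < l) (a b c d : ℝ)
    (hside : (a ∈ Set.Ici (0:ℝ) ∧ b ∈ Set.Ici (0:ℝ) ∧ c ∈ Set.Ici (0:ℝ) ∧ d ∈ Set.Ici (0:ℝ)) ∨
             (a ∈ Set.Iic (0:ℝ) ∧ b ∈ Set.Iic (0:ℝ) ∧ c ∈ Set.Iic (0:ℝ) ∧ d ∈ Set.Iic (0:ℝ)))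
    (hdist : a ≠ b ∧ a ≠ c ∧ a ≠ d ∧ b ≠ c ∧ b ≠ d ∧ c ≠ d)
    (hor : 0 < (b - a) * (d - c)) :
    1 ≤ kappa (fun x => |x| ^ l) a b c d := by
  obtain ⟨-, hac, had, hbc, hbd, -⟩ := hdist
  rcases hside with ⟨ha, hb, hc, hd⟩ | ⟨ha, hb, hc, hd⟩
  · exact one_le_kappa_abs_rpow_of_nonneg hl.le ha hb hc hd hac had hbc hbd hor
  · have h := one_le_kappa_abs_rpow_of_nonneg hl.le (neg_nonneg.2 ha) (neg_nonneg.2 hb)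
      (neg_nonneg.2 hc) (neg_nonneg.2 hd) (neg_injective.ne hac) (neg_injective.ne had)
      (neg_injective.ne hbc) (neg_injective.ne hbd) (by linear_combination hor)
    simpa only [kappa_neg, abs_neg, neg_neg] using h
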